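/- Let κ be a (p,q)-tensor field and π a (q,p)-tensor field density on a smooth manifold M, let ζ be a vector field on M, and let ∇ be a torsion-free covariant derivative. Then the full contraction of the Lie derivative satisfies ℒ_ζκ : π = ∇_ζκ : π − div^∇(π∴κ̂)·ζ + div((π∴κ̂)·ζ), where the last divergence is the canonical divergence of a vector field density. Equivalently, in local coordinates, (ℒ_ζκ)^{α₁…α_p}_{β₁…β_q} π_{α₁…α_p}^{β₁…β_q} = ζ^μ( ∂_μκ^{α₁…α_p}_{β₁…β_q} π_{α₁…α_p}^{β₁…β_q} − ∂_ν( κ̂^{α₁…α_p ν}_{β₁…β_q μ} π_{α₁…α_p}^{β₁…β_q} ) ) + ∂_ν( κ̂^{α₁…α_p ν}_{β₁…β_q μ} π_{α₁…α_p}^{β₁…β_q} ζ^μ ), and the same formula holds with every ∂ replaced by ∇. -/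

import Mathlib

/-!
Statement 0 (Lemma 4.1 / "technical lemma" of the paper, local-coordinate form).

We work in a local chart of the smooth manifold `M`, with points given by their
coordinates in `Fin d → ℝ`.  A `(p,q)`-tensor field (or tensor field density) is
represented by its components `κ x α β = κ^{α₁…α_p}_{β₁…β_q}(x)`, where
`α : Fin p → Fin d` lists the contravariant indices and `β : Fin q → Fin d` the
covariant ones.  A `(q,p)`-tensor field density `π` is represented by its
components `π x α β = π_{α₁…α_p}^{β₁…β_q}(x)` (indices complementary to those of
`κ`).  Partial derivatives are genuine derivatives (`fderiv`) in the chart.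

The theorem is the coordinate identity
`(ℒ_ζκ) : π = ζ^μ( ∂_μκ : π − ∂_ν((π∴κ̂)^ν_μ) ) + ∂_ν((π∴κ̂)^ν_μ ζ^μ)`,
where `κ̂` is the hat tensor and `(π∴κ̂)^ν_μ` the contraction of all indices of
`κ̂` with the corresponding indices of `π` except the last contravariant and
covariant indices of `κ̂`.  This is the local form of the global formula
`ℒ_ζκ : π = ∇_ζκ : π − div^∇(π∴κ̂)·ζ + div((π∴κ̂)·ζ)` for any torsion-free
covariant derivative `∇`.
-/

open scoped BigOperators

namespace GRContinua

variable {d p q : ℕ}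

/-- Points of a local chart of the manifold. -/
abbrev Pt (d : ℕ) := Fin d → ℝ

/-- Components of a `(p,q)`-tensor field (or tensor field density) in the chart. -/
abbrev Tensor (d p q : ℕ) := Pt d → (Fin p → Fin d) → (Fin q → Fin d) → ℝ

/-- Partial derivative `∂_μ f` of a scalar function in the chart. -/
noncomputable def pd (μ : Fin d) (f : Pt d → ℝ) (x : Pt d) : ℝ :=
  fderiv ℝ f x (Pi.single μ 1)

/-- The hat tensor `κ̂` of a `(p,q)`-tensor field `κ`:
`κ̂^{α₁…α_p ν}_{β₁…β_q μ}
  = Σ_r ( κ^{α₁…α_p}_{β₁…β_{r−1} μ β_{r+1}…β_q} δ^ν_{β_r}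
        − κ^{α₁…α_{r−1} ν α_{r+1}…α_p}_{β₁…β_q} δ^{α_r}_μ )`. -/
def hatTensor (κ : Tensor d p q) (x : Pt d) (α : Fin p → Fin d) (ν : Fin d)
    (β : Fin q → Fin d) (μ : Fin d) : ℝ :=
  (∑ r : Fin q, κ x α (Function.update β r μ) * (if ν = β r then 1 else 0))
    - ∑ r : Fin p, κ x (Function.update α r ν) β * (if α r = μ then 1 else 0)

/-- Coordinate expression of the Lie derivative `ℒ_ζ κ` of a `(p,q)`-tensor field:
`(ℒ_ζκ)^{α}_{β} = ζ^γ ∂_γ κ^{α}_{β} + κ̂^{α a}_{β b} ∂_a ζ^b`. -/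
noncomputable def lieDeriv (ζ : Pt d → Fin d → ℝ) (κ : Tensor d p q) : Tensor d p q :=
  fun x α β =>
    (∑ γ : Fin d, ζ x γ * pd γ (fun y => κ y α β) x)
      + ∑ a : Fin d, ∑ b : Fin d, hatTensor κ x α a β b * pd a (fun y => ζ y b) x

/-- `(π ∴ κ̂)^ν_μ` : the `(1,1)`-tensor field density obtained by contracting all of
the indices of `κ̂` with the corresponding indices of `π`, except the last
contravariant and covariant indices of `κ̂`. -/
def hatContr (κ π : Tensor d p q) (x : Pt d) (ν μ : Fin d) : ℝ :=
  ∑ α : Fin p → Fin d, ∑ β : Fin q → Fin d, hatTensor κ x α ν β μ * π x α β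

/-- Full contraction `κ : π` of a `(p,q)`-tensor field with a `(q,p)`-tensor field
density. -/
def fullContr (κ π : Tensor d p q) (x : Pt d) : ℝ :=
  ∑ α : Fin p → Fin d, ∑ β : Fin q → Fin d, κ x α β * π x α β

/-!
Contracting `ℒ_ζκ` with `π` gives `ζ^μ (∂_μκ : π) + (π∴κ̂)^ν_μ ∂_νζ^μ`, since the `∂ζ`-part of
`ℒ_ζκ` is `κ̂` contracted with `∂ζ`. The Leibniz rule writes `∂_ν((π∴κ̂)^ν_μ ζ^μ)` as this second
term plus `ζ^μ ∂_ν(π∴κ̂)^ν_μ`, which cancels the divergence term on the right-hand side.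
-/

theorem pd_sum {ι : Type*} (s : Finset ι) (f : ι → Pt d → ℝ) (μ : Fin d) (x : Pt d)
    (hf : ∀ i ∈ s, DifferentiableAt ℝ (f i) x) :
    pd μ (fun y => ∑ i ∈ s, f i y) x = ∑ i ∈ s, pd μ (f i) x := by
  simp only [pd, fderiv_fun_sum hf, FunLike.coe_sum, Finset.sum_apply]

theorem pd_mul (f g : Pt d → ℝ) (μ : Fin d) (x : Pt d)
    (hf : DifferentiableAt ℝ f x) (hg : DifferentiableAt ℝ g x) :
    pd μ (fun y => f y * g y) x = f x * pd μ g x + g x * pd μ f x := by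
  simp only [pd, fderiv_fun_mul hf hg, add_apply, smul_apply, smul_eq_mul]

theorem pd_sum_mul {ι : Type*} [Fintype ι] (f g : ι → Pt d → ℝ) (μ : Fin d) (x : Pt d)
    (hf : ∀ i, DifferentiableAt ℝ (f i) x) (hg : ∀ i, DifferentiableAt ℝ (g i) x) :
    pd μ (fun y => ∑ i, f i y * g i y) x
      = ∑ i, (f i x * pd μ (g i) x + g i x * pd μ (f i) x) := by
  rw [pd_sum _ (fun i y => f i y * g i y) μ x fun i _ => (hf i).mul (hg i)]
  exact Finset.sum_congr rfl fun i _ => pd_mul _ _ μ x (hf i) (hg i)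

theorem differentiable_hatTensor {κ : Tensor d p q}
    (hκ : ∀ α β, Differentiable ℝ fun x => κ x α β)
    (α : Fin p → Fin d) (ν : Fin d) (β : Fin q → Fin d) (μ : Fin d) :
    Differentiable ℝ fun x => hatTensor κ x α ν β μ :=
  (Differentiable.fun_sum fun _ _ => (hκ _ _).mul_const _).sub
    (Differentiable.fun_sum fun _ _ => (hκ _ _).mul_const _)

theorem differentiable_hatContr {κ π : Tensor d p q}
    (hκ : ∀ α β, Differentiable ℝ fun x => κ x α β)
    (hπ : ∀ α β, Differentiable ℝ fun x => π x α β) (ν μ : Fin d) :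
    Differentiable ℝ fun x => hatContr κ π x ν μ :=
  Differentiable.fun_sum fun α _ => Differentiable.fun_sum fun β _ =>
    (differentiable_hatTensor hκ α ν β μ).mul (hπ α β)

theorem fullContr_lieDeriv (ζ : Pt d → Fin d → ℝ) (κ π : Tensor d p q) (x : Pt d) :
    fullContr (lieDeriv ζ κ) π x
      = (∑ μ : Fin d, ζ x μ * ∑ α : Fin p → Fin d, ∑ β : Fin q → Fin d,
            pd μ (fun y => κ y α β) x * π x α β)
        + ∑ ν : Fin d, ∑ μ : Fin d, hatContr κ π x ν μ * pd ν (fun y => ζ y μ) x := by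
  simp only [fullContr, lieDeriv, hatContr, add_mul, Finset.sum_add_distrib, Finset.sum_mul,
    Finset.mul_sum]
  congr 1
  · rw [Finset.sum_comm_cycle]
    simp only [mul_assoc]
  · rw [Finset.sum_comm_cycle]
    refine Finset.sum_congr rfl fun ν _ => ?_
    rw [Finset.sum_comm_cycle]
    simp only [mul_right_comm]

/-- For a `(p,q)`-tensor field `κ`, a `(q,p)`-tensor field density
`π` and a vector field `ζ` (all with differentiable components), the full
contraction of the Lie derivative satisfies, at every point `x`,
`(ℒ_ζκ) : π = ζ^μ( ∂_μκ : π − ∂_ν((π∴κ̂)^ν_μ) ) + ∂_ν((π∴κ̂)^ν_μ ζ^μ)`,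
the local-coordinate form of
`ℒ_ζκ : π = ∇_ζκ : π − div^∇(π∴κ̂)·ζ + div((π∴κ̂)·ζ)`. -/
theorem lieDeriv_fullContr_divergence_identity
    (κ π : Tensor d p q) (ζ : Pt d → Fin d → ℝ)
    (hκ : ∀ α β, Differentiable ℝ fun x => κ x α β)
    (hπ : ∀ α β, Differentiable ℝ fun x => π x α β)
    (hζ : ∀ b, Differentiable ℝ fun x => ζ x b) :
    ∀ x : Pt d,
      fullContr (lieDeriv ζ κ) π x
        =
      (∑ μ : Fin d, ζ x μ *
          ((∑ α : Fin p → Fin d, ∑ β : Fin q → Fin d,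
              pd μ (fun y => κ y α β) x * π x α β)
            - ∑ ν : Fin d, pd ν (fun y => hatContr κ π y ν μ) x))
        + ∑ ν : Fin d, pd ν (fun y => ∑ μ : Fin d, hatContr κ π y ν μ * ζ y μ) x := by
  intro x
  have leibniz : ∀ ν, pd ν (fun y => ∑ μ : Fin d, hatContr κ π y ν μ * ζ y μ) x
      = ∑ μ : Fin d, (hatContr κ π x ν μ * pd ν (fun y => ζ y μ) x
          + ζ x μ * pd ν (fun y => hatContr κ π y ν μ) x) := fun ν =>
    pd_sum_mul _ _ ν x (fun μ => differentiable_hatContr hκ hπ ν μ x) fun μ => hζ μ x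
  rw [fullContr_lieDeriv, Finset.sum_congr rfl fun ν _ => leibniz ν]
  simp only [mul_sub, Finset.sum_sub_distrib, Finset.sum_add_distrib, Finset.mul_sum]
  rw [Finset.sum_comm (f := fun ν μ => ζ x μ * pd ν (fun y => hatContr κ π y ν μ) x)]
  ring

end GRContinua
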